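/- In every left maximal division E = L ⊔ R of a finite bipartite tree G with parts V_L and V_R, the class R contains exactly |V_R| − 1 edges; equivalently, exactly one vertex of V_R is incident to no edge of R, and every other vertex of V_R is incident to exactly one edge of R. -/

import Mathlib

/-- A graph on a sum type is bipartite with respect to the two summands:
no edges within `V_L` and no edges within `V_R`. -/
def IsBipartiteSum {α β : Type*} (G : SimpleGraph (α ⊕ β)) : Prop :=
  (∀ a a' : α, ¬ G.Adj (Sum.inl a) (Sum.inl a')) ∧
  (∀ b b' : β, ¬ G.Adj (Sum.inr b) (Sum.inr b'))

/-- A division of a bipartite graph: a partition of the edge set into two compartments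
`Lpart` and `Rpart` such that every vertex of `V_L` is incident to at most one edge of
`Lpart` and every vertex of `V_R` is incident to at most one edge of `Rpart`. -/
structure Division {α β : Type*} (G : SimpleGraph (α ⊕ β)) where
  Lpart : Set (Sym2 (α ⊕ β))
  Rpart : Set (Sym2 (α ⊕ β))
  union_eq : Lpart ∪ Rpart = G.edgeSet
  disj : Disjoint Lpart Rpart
  left_le_one : ∀ a : α, {e ∈ Lpart | Sum.inl a ∈ e}.Subsingleton
  right_le_one : ∀ b : β, {e ∈ Rpart | Sum.inr b ∈ e}.Subsingleton

/-- A division is left maximal if every vertex of `V_L` is incident to exactly one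
edge of `Lpart` (existence suffices, since a division allows at most one). -/
def Division.LeftMaximal {α β : Type*} {G : SimpleGraph (α ⊕ β)} (D : Division G) : Prop :=
  ∀ a : α, ∃ e ∈ D.Lpart, Sum.inl a ∈ e

/-- A division is right maximal if every vertex of `V_R` is incident to exactly one
edge of `Rpart`. -/
def Division.RightMaximal {α β : Type*} {G : SimpleGraph (α ⊕ β)} (D : Division G) : Prop :=
  ∀ b : β, ∃ e ∈ D.Rpart, Sum.inr b ∈ e

/-!
Each vertex of `V_L` owns exactly one edge of `L`, so `|L| = |V_L|`; a tree on
`|V_L| + |V_R|` vertices has `|V_L| + |V_R| - 1` edges, hence `|R| = |V_R| - 1`.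
Every edge of `R` has exactly one endpoint in `V_R` and no two share it, so the edges of `R`
cover exactly `|V_R| - 1` vertices of `V_R`, leaving a single one uncovered.
-/

theorem ncard_eq_ncard_of_existsUnique {γ δ : Type*} {S : Set γ} {r : δ → γ → Prop}
    (hex : ∀ e ∈ S, ∃! x, r x e) (hsub : ∀ x, {e ∈ S | r x e}.Subsingleton) :
    S.ncard = {x | ∃ e ∈ S, r x e}.ncard :=
  Set.ncard_congr (fun e he => (hex e he).exists.choose)
    (fun e he => ⟨e, he, (hex e he).exists.choose_spec⟩)
    (fun e e' he he' h => hsub _ ⟨he, (hex e he).exists.choose_spec⟩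
      ⟨he', h ▸ (hex e' he').exists.choose_spec⟩)
    (fun _ ⟨e, he, hx⟩ => ⟨e, he, (hex e he).unique (hex e he).exists.choose_spec hx⟩)

theorem existsUnique_notMem_of_ncard_add_one_eq {β : Type*} [Finite β] {s : Set β}
    (h : s.ncard + 1 = Nat.card β) : ∃! b, b ∉ s := by
  have hcompl : sᶜ.ncard = 1 := by
    have := Set.ncard_add_ncard_compl s
    omega
  obtain ⟨b, hb⟩ := Set.ncard_eq_one.mp hcompl
  exact ⟨b, (Set.ext_iff.mp hb b).mpr rfl, fun b' hb' => hb.subset hb'⟩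

theorem SimpleGraph.IsTree.ncard_edgeSet_add_one {V : Type*} [Finite V] {G : SimpleGraph V}
    (htree : G.IsTree) : G.edgeSet.ncard + 1 = Nat.card V := by
  classical
  have := Fintype.ofFinite V
  rw [← SimpleGraph.coe_edgeFinset, Set.ncard_coe_finset, htree.card_edgeFinset,
    Nat.card_eq_fintype_card]

namespace IsBipartiteSum

variable {α β : Type*} {G : SimpleGraph (α ⊕ β)}

theorem exists_eq_of_mem_edgeSet (hbip : IsBipartiteSum G) {e : Sym2 (α ⊕ β)}
    (he : e ∈ G.edgeSet) : ∃ a b, e = s(Sum.inl a, Sum.inr b) := by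
  induction e using Sym2.inductionOn with
  | hf x y =>
    rw [SimpleGraph.mem_edgeSet] at he
    match x, y with
    | Sum.inl a, Sum.inl a' => exact absurd he (hbip.1 a a')
    | Sum.inl a, Sum.inr b => exact ⟨a, b, rfl⟩
    | Sum.inr b, Sum.inl a => exact ⟨a, b, Sym2.eq_swap⟩
    | Sum.inr b, Sum.inr b' => exact absurd he (hbip.2 b b')

theorem existsUnique_inl_mem (hbip : IsBipartiteSum G) {e : Sym2 (α ⊕ β)}
    (he : e ∈ G.edgeSet) : ∃! a, Sum.inl a ∈ e := by
  obtain ⟨a, b, rfl⟩ := hbip.exists_eq_of_mem_edgeSet he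
  exact ⟨a, by simp, fun a' => by simp⟩

theorem existsUnique_inr_mem (hbip : IsBipartiteSum G) {e : Sym2 (α ⊕ β)}
    (he : e ∈ G.edgeSet) : ∃! b, Sum.inr b ∈ e := by
  obtain ⟨a, b, rfl⟩ := hbip.exists_eq_of_mem_edgeSet he
  exact ⟨b, by simp, fun b' => by simp⟩

end IsBipartiteSum

namespace Division

variable {α β : Type*} {G : SimpleGraph (α ⊕ β)} (D : Division G)

theorem Lpart_subset : D.Lpart ⊆ G.edgeSet := D.union_eq ▸ Set.subset_union_left

theorem Rpart_subset : D.Rpart ⊆ G.edgeSet := D.union_eq ▸ Set.subset_union_right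

theorem ncard_Lpart_add_ncard_Rpart [Finite α] [Finite β] :
    D.Lpart.ncard + D.Rpart.ncard = G.edgeSet.ncard := by
  rw [← Set.ncard_union_eq D.disj, D.union_eq]

theorem ncard_Lpart_of_leftMaximal (hbip : IsBipartiteSum G) (hD : D.LeftMaximal) :
    D.Lpart.ncard = Nat.card α := by
  have hcover : {a | ∃ e ∈ D.Lpart, Sum.inl a ∈ e} = Set.univ := Set.eq_univ_of_forall hD
  rw [ncard_eq_ncard_of_existsUnique (fun _ he => hbip.existsUnique_inl_mem (D.Lpart_subset he))
    D.left_le_one, hcover, Set.ncard_univ]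

theorem ncard_Rpart (hbip : IsBipartiteSum G) :
    D.Rpart.ncard = {b | ∃ e ∈ D.Rpart, Sum.inr b ∈ e}.ncard :=
  ncard_eq_ncard_of_existsUnique (fun _ he => hbip.existsUnique_inr_mem (D.Rpart_subset he))
    D.right_le_one

end Division

/-- In every left maximal division `E = L ⊔ R` of a finite bipartite tree, the
compartment `R` contains exactly `|V_R| − 1` edges; equivalently, exactly one vertex
of `V_R` is incident to no edge of `R` (and every other vertex of `V_R` is incident
to exactly one edge of `R`, since a division allows at most one). -/
theorem left_maximal_division_red_count {α β : Type*} [Fintype α] [Fintype β]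
    (G : SimpleGraph (α ⊕ β)) (hbip : IsBipartiteSum G) (htree : G.IsTree)
    (D : Division G) (hD : D.LeftMaximal) :
    D.Rpart.ncard = Fintype.card β - 1 ∧
    (∃! b : β, ∀ e ∈ D.Rpart, Sum.inr b ∉ e) := by
  have hedges := htree.ncard_edgeSet_add_one
  have hsplit := D.ncard_Lpart_add_ncard_Rpart
  have hL := D.ncard_Lpart_of_leftMaximal hbip hD
  rw [Nat.card_sum] at hedges
  have hR : D.Rpart.ncard + 1 = Nat.card β := by omega
  refine ⟨by rw [← Nat.card_eq_fintype_card]; omega, ?_⟩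
  rw [D.ncard_Rpart hbip] at hR
  simpa using existsUnique_notMem_of_ncard_add_one_eq hR
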